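/- arXiv:hep-th/0508188 — 2 statements merged into one kernel-verified Lean document; each statement's English description precedes it below -/
import Mathlib

section
/- On the unit disk with 𝒢(z,w) = ((2u+1)/(2π)) log((u+1)/u) - 1/π and u(z,w) = |z-w|²/((1-|z|²)(1-|w|²)), one has the explicit evaluation ∂_z∂_w 𝒢(0,w) = -(1/2π)·(w̄²/(1-|w|²))·((1-3|w|²)/|w|⁴ - (2/(1-|w|²)) log|w|²) for w ≠ 0. -/
open Complex

/-- The Wirtinger derivative `∂_z f = (∂_x f - i ∂_y f)/2`. -/
noncomputable def wD (f : ℂ → ℂ) (z : ℂ) : ℂ :=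
  (fderiv ℝ f z 1 - Complex.I * fderiv ℝ f z Complex.I) / 2

/-- The point-pair invariant on the unit disk: `u(z,w) = |z-w|²/((1-|z|²)(1-|w|²))`. -/
noncomputable def uDisk (z w : ℂ) : ℝ :=
  ‖z - w‖ ^ 2 / ((1 - ‖z‖ ^ 2) * (1 - ‖w‖ ^ 2))

/-- The propagator `𝒢(z,w) = ((2u+1)/(2π)) log((u+1)/u) - 1/π` on the unit disk. -/
noncomputable def GDisk (z w : ℂ) : ℝ :=
  ((2 * uDisk z w + 1) / (2 * Real.pi)) * Real.log ((uDisk z w + 1) / uDisk z w) - 1 / Real.pi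

/-!
Write `𝒢 = g ∘ u` with `g(t) = ((2t+1)/2π) log((t+1)/t) - 1/π`. The Wirtinger chain and
product rules give `∂_z∂_w 𝒢 = g''(u) ∂_z u ∂_w u + g'(u) ∂_z∂_w u`, where
`g''(t) = 1/(2π t²(t+1)²)` and, treating `z` and `z̄` as independent,
`∂_w u(z,w) = (w̄ - z̄)(1 - w̄z)/((1-|z|²)(1-|w|²)²)`.
At `z = 0` one has `u = |w|²/(1-|w|²)`, `log((u+1)/u) = -log|w|²`, `∂_z u = -w̄/(1-|w|²)`,
`∂_w u = w̄/(1-|w|²)²` and `∂_z∂_w u = -w̄²/(1-|w|²)²`; substituting gives the formula.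
-/

open ComplexConjugate
open scoped Real

def HasWirtingerDerivAt (f : ℂ → ℂ) (a z : ℂ) : Prop :=
  ∃ L : ℂ →L[ℝ] ℂ, HasFDerivAt f L z ∧ (L 1 - I * L I) / 2 = a

namespace HasWirtingerDerivAt

variable {f g : ℂ → ℂ} {a b z : ℂ}

theorem wD_eq (h : HasWirtingerDerivAt f a z) : wD f z = a := by
  obtain ⟨L, hL, rfl⟩ := h
  rw [wD, hL.fderiv]

theorem congr_deriv (h : HasWirtingerDerivAt f a z) (hab : a = b) : HasWirtingerDerivAt f b z :=
  hab ▸ h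

theorem congr_of_eventuallyEq (h : HasWirtingerDerivAt f a z) (hfg : g =ᶠ[nhds z] f) :
    HasWirtingerDerivAt g a z := by
  obtain ⟨L, hL, rfl⟩ := h
  exact ⟨L, hL.congr_of_eventuallyEq hfg, rfl⟩

theorem sub (hf : HasWirtingerDerivAt f a z) (hg : HasWirtingerDerivAt g b z) :
    HasWirtingerDerivAt (fun x => f x - g x) (a - b) z := by
  obtain ⟨L, hL, rfl⟩ := hf
  obtain ⟨M, hM, rfl⟩ := hg
  exact ⟨L - M, hL.sub hM, by simp only [sub_apply]; ring⟩

theorem mul (hf : HasWirtingerDerivAt f a z) (hg : HasWirtingerDerivAt g b z) :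
    HasWirtingerDerivAt (fun x => f x * g x) (a * g z + f z * b) z := by
  obtain ⟨L, hL, rfl⟩ := hf
  obtain ⟨M, hM, rfl⟩ := hg
  refine ⟨_, hL.mul hM, ?_⟩
  simp only [add_apply, smul_apply, smul_eq_mul]
  ring

theorem _root_.HasDerivAt.comp_hasWirtingerDerivAt {φ : ℂ → ℂ} {φ' : ℂ}
    (hφ : HasDerivAt φ φ' (f z)) (hf : HasWirtingerDerivAt f a z) :
    HasWirtingerDerivAt (fun x => φ (f x)) (φ' * a) z := by
  obtain ⟨L, hL, rfl⟩ := hf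
  refine ⟨_, (hφ.hasFDerivAt.restrictScalars ℝ).comp z hL, ?_⟩
  simp
  ring

theorem inv (hf : HasWirtingerDerivAt f a z) (hz : f z ≠ 0) :
    HasWirtingerDerivAt (fun x => (f x)⁻¹) (-a / f z ^ 2) z :=
  ((hasDerivAt_inv hz).comp_hasWirtingerDerivAt hf).congr_deriv (by ring)

theorem div (hf : HasWirtingerDerivAt f a z) (hg : HasWirtingerDerivAt g b z) (hz : g z ≠ 0) :
    HasWirtingerDerivAt (fun x => f x / g x) ((a * g z - f z * b) / g z ^ 2) z := by
  simp only [div_eq_mul_inv]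
  refine (hf.mul (hg.inv hz)).congr_deriv ?_
  field_simp
  ring

theorem ofReal_comp {h : ℂ → ℝ} {φ : ℝ → ℝ} {φ' : ℝ}
    (hh : HasWirtingerDerivAt (fun x => (h x : ℂ)) a z) (hφ : HasDerivAt φ φ' (h z)) :
    HasWirtingerDerivAt (fun x => (φ (h x) : ℂ)) (φ' * a) z := by
  obtain ⟨L, hL, rfl⟩ := hh
  have hre : HasFDerivAt h (reCLM.comp L) z := by
    have hcomp := reCLM.hasFDerivAt.comp z hL
    rwa [show (reCLM ∘ fun x => (h x : ℂ)) = h from funext fun x => ofReal_re (h x)] at hcomp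
  have hL_real : L = ofRealCLM.comp (reCLM.comp L) :=
    hL.unique (ofRealCLM.hasFDerivAt.comp z hre)
  refine ⟨_, ofRealCLM.hasFDerivAt.comp z (hφ.comp_hasFDerivAt z hre), ?_⟩
  rw [hL_real]
  simp
  ring

end HasWirtingerDerivAt

theorem hasWirtingerDerivAt_id (z : ℂ) : HasWirtingerDerivAt (fun x => x) 1 z :=
  ⟨_, hasFDerivAt_id z, by simp⟩

theorem hasWirtingerDerivAt_const (c z : ℂ) : HasWirtingerDerivAt (fun _ => c) 0 z :=
  ⟨0, hasFDerivAt_const c z, by simp⟩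

theorem hasWirtingerDerivAt_conj (z : ℂ) : HasWirtingerDerivAt (fun x => conj x) 0 z :=
  ⟨_, conjCLE.hasFDerivAt, by simp⟩

noncomputable def propagator (t : ℝ) : ℝ :=
  ((2 * t + 1) / (2 * π)) * Real.log ((t + 1) / t) - 1 / π

noncomputable def propagatorDeriv (t : ℝ) : ℝ :=
  Real.log ((t + 1) / t) / π - (2 * t + 1) / (2 * π * (t * (t + 1)))

section propagator

variable {t : ℝ}

theorem hasDerivAt_log_add_one_div (h₀ : t ≠ 0) (h₁ : t + 1 ≠ 0) :
    HasDerivAt (fun s => Real.log ((s + 1) / s)) (-1 / (t * (t + 1))) t := by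
  have hq : HasDerivAt (fun s => (s + 1) / s) ((1 * t - (t + 1) * 1) / t ^ 2) t :=
    ((hasDerivAt_id t).add_const 1).div (hasDerivAt_id t) h₀
  refine (hq.log (div_ne_zero h₁ h₀)).congr_deriv ?_
  field_simp
  ring

theorem hasDerivAt_propagator (h₀ : t ≠ 0) (h₁ : t + 1 ≠ 0) :
    HasDerivAt propagator (propagatorDeriv t) t := by
  have hlin : HasDerivAt (fun s => (2 * s + 1) / (2 * π)) (2 / (2 * π)) t := by
    simpa using (((hasDerivAt_id t).const_mul 2).add_const 1).div_const (2 * π)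
  refine ((hlin.mul (hasDerivAt_log_add_one_div h₀ h₁)).sub_const (1 / π)).congr_deriv ?_
  rw [propagatorDeriv]
  field_simp
  ring

theorem hasDerivAt_propagatorDeriv (h₀ : t ≠ 0) (h₁ : t + 1 ≠ 0) :
    HasDerivAt propagatorDeriv (1 / (2 * π * (t * (t + 1)) ^ 2)) t := by
  have hden : HasDerivAt (fun s => 2 * π * (s * (s + 1))) (2 * π * (1 * (t + 1) + t * 1)) t :=
    ((hasDerivAt_id t).mul ((hasDerivAt_id t).add_const 1)).const_mul (2 * π)
  have hnum : HasDerivAt (fun s => 2 * s + 1) 2 t := by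
    simpa using ((hasDerivAt_id t).const_mul 2).add_const 1
  have hden₀ : 2 * π * (t * (t + 1)) ≠ 0 := by positivity
  refine (((hasDerivAt_log_add_one_div h₀ h₁).div_const π).sub
    (hnum.div hden hden₀)).congr_deriv ?_
  field_simp
  ring

end propagator

theorem one_sub_mul_conj_ne_zero {z : ℂ} (hz : ‖z‖ ≠ 1) : 1 - z * conj z ≠ 0 := by
  have hz2 : ‖z‖ ^ 2 ≠ 1 := by rwa [Ne, pow_eq_one_iff_of_nonneg (norm_nonneg z) two_ne_zero]
  rw [mul_conj', sub_ne_zero]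
  exact_mod_cast hz2.symm

theorem ofReal_uDisk (z w : ℂ) :
    (uDisk z w : ℂ) = (z - w) * (conj z - conj w) / ((1 - z * conj z) * (1 - w * conj w)) := by
  simp [uDisk, mul_conj', ← map_sub]

theorem uDisk_comm (z w : ℂ) : uDisk z w = uDisk w z := by
  rw [uDisk, uDisk, norm_sub_rev, mul_comm (1 - ‖z‖ ^ 2)]

theorem uDisk_pos {z w : ℂ} (hz : ‖z‖ < 1) (hw : ‖w‖ < 1) (hzw : z ≠ w) :
    0 < uDisk z w := by
  have hz2 : ‖z‖ ^ 2 < 1 := pow_lt_one₀ (norm_nonneg z) hz two_ne_zero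
  have hw2 : ‖w‖ ^ 2 < 1 := pow_lt_one₀ (norm_nonneg w) hw two_ne_zero
  have hzw' : 0 < ‖z - w‖ := norm_pos_iff.2 (sub_ne_zero.2 hzw)
  unfold uDisk
  apply div_pos (by positivity)
  exact mul_pos (by linarith) (by linarith)

noncomputable def uDiskDeriv (z w : ℂ) : ℂ :=
  (conj w - conj z) * (1 - conj w * z) / ((1 - z * conj z) * (1 - w * conj w) ^ 2)

theorem hasWirtingerDerivAt_uDisk_right {z w : ℂ} (hz : ‖z‖ ≠ 1) (hw : ‖w‖ ≠ 1) :
    HasWirtingerDerivAt (fun ω => (uDisk z ω : ℂ)) (uDiskDeriv z w) w := by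
  have hz' := one_sub_mul_conj_ne_zero hz
  have hw' := one_sub_mul_conj_ne_zero hw
  simp only [ofReal_uDisk]
  have hnum := ((hasWirtingerDerivAt_const z w).sub (hasWirtingerDerivAt_id w)).mul
    ((hasWirtingerDerivAt_const (conj z) w).sub (hasWirtingerDerivAt_conj w))
  have hden := (hasWirtingerDerivAt_const (1 - z * conj z) w).mul
    ((hasWirtingerDerivAt_const 1 w).sub
      ((hasWirtingerDerivAt_id w).mul (hasWirtingerDerivAt_conj w)))
  refine (hnum.div hden (mul_ne_zero hz' hw')).congr_deriv ?_
  rw [uDiskDeriv, div_eq_div_iff (pow_ne_zero 2 (mul_ne_zero hz' hw'))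
    (mul_ne_zero hz' (pow_ne_zero 2 hw'))]
  ring

theorem hasWirtingerDerivAt_uDisk_left {z w : ℂ} (hz : ‖z‖ ≠ 1) (hw : ‖w‖ ≠ 1) :
    HasWirtingerDerivAt (fun z => (uDisk z w : ℂ)) (uDiskDeriv w z) z := by
  simp only [uDisk_comm _ w]
  exact hasWirtingerDerivAt_uDisk_right hw hz

theorem hasWirtingerDerivAt_uDiskDeriv_zero {w : ℂ} (hw : ‖w‖ ≠ 1) :
    HasWirtingerDerivAt (fun z => uDiskDeriv z w) (-conj w ^ 2 / (1 - w * conj w) ^ 2) 0 := by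
  have hw' := one_sub_mul_conj_ne_zero hw
  unfold uDiskDeriv
  have hnum := ((hasWirtingerDerivAt_const (conj w) 0).sub (hasWirtingerDerivAt_conj 0)).mul
    ((hasWirtingerDerivAt_const 1 0).sub
      ((hasWirtingerDerivAt_const (conj w) 0).mul (hasWirtingerDerivAt_id 0)))
  have hden := ((hasWirtingerDerivAt_const 1 0).sub
    ((hasWirtingerDerivAt_id 0).mul (hasWirtingerDerivAt_conj 0))).mul
      (hasWirtingerDerivAt_const ((1 - w * conj w) ^ 2) 0)
  refine (hnum.div hden (by simpa using pow_ne_zero 2 hw')).congr_deriv ?_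
  rw [map_zero, div_eq_div_iff (by simpa using pow_ne_zero 4 hw') (pow_ne_zero 2 hw')]
  ring

theorem hasWirtingerDerivAt_GDisk_right {z w : ℂ} (hz : ‖z‖ < 1) (hw : ‖w‖ < 1)
    (hzw : z ≠ w) :
    HasWirtingerDerivAt (fun ω => (GDisk z ω : ℂ))
      (propagatorDeriv (uDisk z w) * uDiskDeriv z w) w := by
  have hu := uDisk_pos hz hw hzw
  -- `GDisk z` is `propagator ∘ uDisk z` by definition
  exact (hasWirtingerDerivAt_uDisk_right hz.ne hw.ne).ofReal_comp
    (hasDerivAt_propagator hu.ne' (by linarith))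

theorem uDisk_zero_left (w : ℂ) : uDisk 0 w = ‖w‖ ^ 2 / (1 - ‖w‖ ^ 2) := by
  simp [uDisk]

theorem log_uDisk_zero_left {w : ℂ} (hw₀ : ‖w‖ ≠ 0) (hw₁ : 1 - ‖w‖ ^ 2 ≠ 0) :
    Real.log ((uDisk 0 w + 1) / uDisk 0 w) = -Real.log (‖w‖ ^ 2) := by
  rw [uDisk_zero_left, ← Real.log_inv]
  congr 1
  field_simp
  ring

/-- Explicit evaluation of the mixed derivative of the disk propagator at `z = 0`:
`∂_z∂_w 𝒢(0,w) = -(1/2π)(w̄²/(1-|w|²))((1-3|w|²)/|w|⁴ - (2/(1-|w|²)) log|w|²)`. -/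
theorem dz_dw_GDisk_at_zero (w : ℂ) (hw : ‖w‖ < 1) (hw0 : w ≠ 0) :
    wD (fun z => wD (fun ω => (GDisk z ω : ℂ)) w) 0
      = -(1 / (2 * (Real.pi : ℂ))) * ((starRingEnd ℂ) w ^ 2 / (1 - (‖w‖ : ℂ) ^ 2))
          * ((1 - 3 * (‖w‖ : ℂ) ^ 2) / (‖w‖ : ℂ) ^ 4
              - (2 / (1 - (‖w‖ : ℂ) ^ 2)) * (Real.log (‖w‖ ^ 2) : ℂ)) := by
  have hr : 0 < ‖w‖ := norm_pos_iff.2 hw0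
  have hr1 : 1 - ‖w‖ ^ 2 ≠ 0 := (sub_pos.2 (pow_lt_one₀ hr.le hw two_ne_zero)).ne'
  have hinner : (fun z => wD (fun ω => (GDisk z ω : ℂ)) w) =ᶠ[nhds 0]
      fun z => (propagatorDeriv (uDisk z w) : ℂ) * uDiskDeriv z w := by
    filter_upwards [Metric.ball_mem_nhds 0 hr] with z hz
    have hzw : ‖z‖ < ‖w‖ := by simpa using hz
    exact (hasWirtingerDerivAt_GDisk_right (hzw.trans hw) hw (by rintro rfl; exact hzw.false)).wD_eq
  have hu : 0 < uDisk 0 w := uDisk_pos (by simp) hw (Ne.symm hw0)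
  have houter := ((hasWirtingerDerivAt_uDisk_left (by simp) hw.ne).ofReal_comp
    (hasDerivAt_propagatorDeriv hu.ne' (by linarith))).mul
      (hasWirtingerDerivAt_uDiskDeriv_zero hw.ne)
  rw [(houter.congr_of_eventuallyEq hinner).wD_eq, propagatorDeriv,
    log_uDisk_zero_left hr.ne' hr1]
  simp only [uDiskDeriv, uDisk_zero_left, mul_conj', map_zero]
  have hr1ℂ : (1 : ℂ) - (‖w‖ : ℂ) ^ 2 ≠ 0 := by exact_mod_cast hr1
  have hrℂ : (‖w‖ : ℂ) ≠ 0 := by exact_mod_cast hr.ne'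
  have hπ : (π : ℂ) ≠ 0 := by exact_mod_cast Real.pi_ne_zero
  push_cast
  field_simp
  ring
end

section
/- For every ζ ∈ 𝔻, lim_{ε→0} ∬_{𝔻, |w|≥ε} (∂_z∂_w𝒢(0,w))² (1-|w|²)²(1-ζw̄)^{-4} d²w = 0. -/
open Complex MeasureTheory Filter Topology

/-- The mixed derivative `∂_z∂_w 𝒢(0,w)` of the disk propagator. -/
noncomputable def DDGDisk (w : ℂ) : ℂ :=
  wD (fun z => wD (fun ω => (GDisk z ω : ℂ)) w) 0

/-! ### Auxiliary lemmas on the Wirtinger derivative -/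

lemma clm_apply_eq (φ : ℂ →L[ℝ] ℂ) (v : ℂ) :
    φ v = (v.re : ℂ) * φ 1 + (v.im : ℂ) * φ Complex.I := by
  have h : v = v.re • (1 : ℂ) + v.im • Complex.I := by
    simp [Complex.real_smul, Complex.re_add_im]
  conv_lhs => rw [h]
  rw [map_add, φ.map_smul, φ.map_smul]
  simp [Complex.real_smul]

lemma wD_comp_const_mul (f : ℂ → ℂ) (c w : ℂ) (hc : c ≠ 0) :
    wD (fun z => f (c * z)) w = c * wD f (c * w) := by
  by_cases hf : DifferentiableAt ℝ f (c * w)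
  · have hL : fderiv ℝ (fun z => f (c * z)) w
        = (fderiv ℝ f (c * w)).comp (ContinuousLinearMap.mul ℝ ℂ c) := by
      have h2 : DifferentiableAt ℝ (⇑(ContinuousLinearMap.mul ℝ ℂ c)) w :=
        (ContinuousLinearMap.mul ℝ ℂ c).differentiableAt
      have h3 := fderiv_comp w (by simpa using hf) h2
      rw [ContinuousLinearMap.fderiv] at h3
      simpa [Function.comp_def] using h3
    set φ := fderiv ℝ f (c * w) with hφ
    unfold wD
    rw [hL]
    simp only [ContinuousLinearMap.comp_apply, ContinuousLinearMap.mul_apply', mul_one]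
    rw [clm_apply_eq φ c, clm_apply_eq φ (c * Complex.I)]
    simp only [Complex.mul_I_re, Complex.mul_I_im]
    push_cast
    have hc' := Complex.re_add_im c
    linear_combination hc' * ((φ 1 - Complex.I * φ Complex.I) / 2) +
      Complex.I_mul_I * ((c.im : ℂ) * φ Complex.I / 2)
  · have hg : ¬ DifferentiableAt ℝ (fun z => f (c * z)) w := by
      intro h
      apply hf
      have h2 := DifferentiableAt.comp (𝕜 := ℝ) (c * w)
        (show DifferentiableAt ℝ (fun y => f (c * y)) (c⁻¹ * (c * w)) by
          rw [inv_mul_cancel_left₀ hc]; exact h)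
        (differentiableAt_fun_id.const_mul c⁻¹)
      have h3 : ((fun y => f (c * y)) ∘ fun z => c⁻¹ * z) = f := by
        funext z
        simp [Function.comp, mul_inv_cancel_left₀ hc]
      rwa [h3] at h2
    unfold wD
    rw [fderiv_zero_of_not_differentiableAt hf, fderiv_zero_of_not_differentiableAt hg]
    simp

lemma wD_const_mul (f : ℂ → ℂ) (a w : ℂ) :
    wD (fun z => a * f z) w = a * wD f w := by
  rcases eq_or_ne a 0 with rfl | ha
  · simp [wD]
  by_cases hf : DifferentiableAt ℝ f w
  · have h1 : fderiv ℝ (fun z => a * f z) w = a • fderiv ℝ f w := by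
      have := fderiv_fun_const_smul (𝕜 := ℝ) (R := ℂ) hf a
      simpa [smul_eq_mul] using this
    unfold wD
    rw [h1]
    simp only [ContinuousLinearMap.smul_apply, smul_eq_mul]
    ring
  · have hg : ¬ DifferentiableAt ℝ (fun z => a * f z) w := by
      intro h
      apply hf
      have h2 : DifferentiableAt ℝ (fun z => a⁻¹ * (a * f z)) w := h.const_mul _
      simpa [inv_mul_cancel_left₀ ha] using h2
    unfold wD
    rw [fderiv_zero_of_not_differentiableAt hf, fderiv_zero_of_not_differentiableAt hg]
    simp

/-! ### Rotation equivariance of the propagator derivative -/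

lemma uDisk_rot {c : ℂ} (hc : ‖c‖ = 1) (z w : ℂ) :
    uDisk (c * z) (c * w) = uDisk z w := by
  unfold uDisk
  rw [← mul_sub, norm_mul, norm_mul, norm_mul, hc]
  ring

lemma GDisk_rot {c : ℂ} (hc : ‖c‖ = 1) (z w : ℂ) :
    GDisk (c * z) (c * w) = GDisk z w := by
  unfold GDisk
  rw [uDisk_rot hc]

lemma DDGDisk_rot {c : ℂ} (hc : ‖c‖ = 1) (w : ℂ) :
    DDGDisk (c * w) = (c⁻¹) ^ 2 * DDGDisk w := by
  have hc0 : c ≠ 0 := by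
    intro h; rw [h] at hc; simp at hc
  have hF : ∀ z w' : ℂ, wD (fun ω => (GDisk (c * z) ω : ℂ)) (c * w')
      = c⁻¹ * wD (fun ω => (GDisk z ω : ℂ)) w' := by
    intro z w'
    have h1 := wD_comp_const_mul (fun ω => ((GDisk (c * z) ω : ℝ) : ℂ)) c w' hc0
    have h2 : (fun ω => ((GDisk (c * z) (c * ω) : ℝ) : ℂ)) = fun ω => ((GDisk z ω : ℝ) : ℂ) :=
      funext fun ω => by rw [GDisk_rot hc]
    rw [h2] at h1
    rw [h1, inv_mul_cancel_left₀ hc0]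
  have key : (fun z => wD (fun ω => (GDisk z ω : ℂ)) (c * w))
      = fun z => c⁻¹ * ((fun y => wD (fun ω => (GDisk y ω : ℂ)) w) (c⁻¹ * z)) := by
    funext z
    conv_lhs => rw [show z = c * (c⁻¹ * z) by rw [mul_inv_cancel_left₀ hc0]]
    exact hF _ w
  show wD (fun z => wD (fun ω => (GDisk z ω : ℂ)) (c * w)) 0 = _
  rw [key, wD_const_mul, wD_comp_const_mul (fun y => wD (fun ω => (GDisk y ω : ℂ)) w) c⁻¹ 0
    (inv_ne_zero hc0), mul_zero]
  show c⁻¹ * (c⁻¹ * DDGDisk w) = _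
  ring

/-! ### The vanishing angular integral -/

lemma exp_neg_two_pi_I : Complex.exp (-((2 * Real.pi : ℝ) : ℂ) * Complex.I) = 1 := by
  have := Complex.exp_int_mul_two_pi_mul_I (-1)
  convert this using 2
  push_cast
  ring

lemma vne {a : ℂ} (ha : ‖a‖ < 1) (θ : ℝ) :
    1 - a * Complex.exp (-(θ:ℂ) * Complex.I) ≠ 0 := by
  intro h
  have h1 : a * Complex.exp (-(θ:ℂ) * Complex.I) = 1 := (sub_eq_zero.mp h).symm
  have h2 : ‖a * Complex.exp (-(θ:ℂ) * Complex.I)‖ = ‖a‖ := by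
    rw [norm_mul, show -(θ:ℂ) * Complex.I = ((-θ : ℝ) : ℂ) * Complex.I by push_cast; ring,
      Complex.norm_exp_ofReal_mul_I, mul_one]
  rw [h1] at h2
  simp at h2
  rw [← h2] at ha
  exact lt_irrefl _ ha

lemma v_re_pos {a : ℂ} (ha : ‖a‖ < 1) (θ : ℝ) :
    0 < (1 - a * Complex.exp (-(θ:ℂ) * Complex.I)).re := by
  have h2 : ‖a * Complex.exp (-(θ:ℂ) * Complex.I)‖ = ‖a‖ := by
    rw [norm_mul, show -(θ:ℂ) * Complex.I = ((-θ : ℝ) : ℂ) * Complex.I by push_cast; ring,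
      Complex.norm_exp_ofReal_mul_I, mul_one]
  have h3 := Complex.abs_re_le_norm (a * Complex.exp (-(θ:ℂ) * Complex.I))
  rw [h2] at h3
  have h4 := (abs_le.mp h3).2
  simp only [Complex.sub_re, Complex.one_re]
  linarith

open intervalIntegral in
lemma key_integral {a : ℂ} (ha : ‖a‖ < 1) :
    ∫ θ in (0:ℝ)..(2*Real.pi),
      (Complex.exp (-(θ:ℂ) * Complex.I))^4 / (1 - a * Complex.exp (-(θ:ℂ) * Complex.I))^4 = 0 := by
  rcases eq_or_ne a 0 with rfl | ha0
  · simp only [zero_mul, sub_zero, one_pow, div_one]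
    have hc : (-4 : ℂ) * Complex.I ≠ 0 := by simp [Complex.I_ne_zero]
    have h1 : ∀ θ : ℝ, (Complex.exp (-(θ:ℂ) * Complex.I))^4
        = Complex.exp ((-4 * Complex.I) * (θ:ℂ)) := by
      intro θ
      rw [← Complex.exp_nat_mul]
      congr 1; push_cast; ring
    simp only [h1]
    rw [integral_exp_mul_complex hc]
    rw [show (-4 : ℂ) * Complex.I * ((2 * Real.pi : ℝ) : ℂ)
        = ((-4 : ℤ) : ℂ) * (2 * (Real.pi : ℂ) * Complex.I) by push_cast; ring]
    rw [Complex.exp_int_mul_two_pi_mul_I]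
    simp
  · set v : ℝ → ℂ := fun θ => 1 - a * Complex.exp (-(θ:ℂ) * Complex.I) with hv
    set P : ℝ → ℂ := fun θ => (Complex.I / a^4) *
      ((1/3) * ((v θ)^3)⁻¹ - (3/2) * ((v θ)^2)⁻¹ + 3 * (v θ)⁻¹ + Complex.log (v θ)) with hP
    have hvne : ∀ θ : ℝ, v θ ≠ 0 := fun θ => vne ha θ
    have hvd : ∀ θ : ℝ, HasDerivAt v (a * Complex.I * Complex.exp (-(θ:ℂ) * Complex.I)) θ := by
      intro θ
      have h1 : HasDerivAt (fun θ : ℝ => -(θ:ℂ) * Complex.I) (-Complex.I) θ := by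
        simpa using ((Complex.ofRealCLM.hasDerivAt (x := θ)).neg.mul_const Complex.I)
      have h2 := h1.cexp
      have h3 := (h2.const_mul a).const_sub 1
      convert h3 using 1
      · rfl
      ring
    have hPd : ∀ θ : ℝ, HasDerivAt P
        ((Complex.exp (-(θ:ℂ) * Complex.I))^4 / (v θ)^4) θ := by
      intro θ
      have hz : v θ ≠ 0 := hvne θ
      have h3 := ((hasDerivAt_pow 3 (v θ)).inv (pow_ne_zero _ hz))
      have h2 := ((hasDerivAt_pow 2 (v θ)).inv (pow_ne_zero _ hz))
      have h1 := hasDerivAt_inv hz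
      have h0 := Complex.hasDerivAt_log (Or.inl (v_re_pos ha θ))
      have hQ := ((((h3.const_mul ((1:ℂ)/3)).sub (h2.const_mul ((3:ℂ)/2))).add
        (h1.const_mul (3:ℂ))).add h0).const_mul (Complex.I / a^4)
      have hcomp := HasDerivAt.scomp (𝕜 := ℝ) θ hQ (hvd θ)
      convert hcomp using 1
      case e'_4 => rfl
      case e'_8 => rfl
      set E := Complex.exp (-(θ:ℂ) * Complex.I) with hE
      have hw : v θ = 1 - a * E := by rw [hv]
      have hne2 : (1 : ℂ) - a * E ≠ 0 := hw ▸ hvne θ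
      have hEne : E ≠ 0 := Complex.exp_ne_zero _
      rw [smul_eq_mul]
      rw [show ∀ X : ℂ, a * Complex.I * E * (Complex.I / a^4 * X) = -(a * E / a^4 * X) by
        intro X; linear_combination Complex.I_mul_I * (a * E * X / a^4)]
      rw [hw]
      set w : ℂ := 1 - a * E with hwdef
      have hwne : w ≠ 0 := hne2
      clear_value E w
      have hBIG : 1 / 3 * (-(((3:ℕ):ℂ) * w ^ (3 - 1)) / (w ^ 3) ^ 2)
            - 3 / 2 * (-(((2:ℕ):ℂ) * w ^ (2 - 1)) / (w ^ 2) ^ 2)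
            + 3 * -(w ^ 2)⁻¹ + w⁻¹
          = -((1 - w)^3) / w^4 := by
        push_cast
        rw [eq_div_iff (pow_ne_zero 4 hwne)]
        field_simp
        ring_nf
      rw [hBIG, show (1:ℂ) - w = a * E by rw [hwdef]; ring]
      field_simp
    have hcont : Continuous (fun θ : ℝ =>
        (Complex.exp (-(θ:ℂ) * Complex.I))^4 / (v θ)^4) := by
      apply Continuous.div
      · fun_prop
      · fun_prop
      · exact fun θ => pow_ne_zero 4 (hvne θ)
    rw [intervalIntegral.integral_eq_sub_of_hasDerivAt (fun θ _ => hPd θ)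
      (hcont.intervalIntegrable _ _)]
    have hveq : v (2 * Real.pi) = v 0 := by
      simp only [hv]
      rw [exp_neg_two_pi_I]
      norm_num
    rw [hP]
    simp only [hveq]
    ring

/-! ### Rotation-invariant set integrals -/

lemma rot_setIntegral {E : Type*} [NormedAddCommGroup E] [NormedSpace ℝ E] (S : Set ℂ)
    (hSm : MeasurableSet S) (hS : ∀ a : Circle, (rotation a) ⁻¹' S = S) (h : ℂ → E) (α : ℝ) :
    (∫ w in S, h (Complex.exp ((α:ℂ) * Complex.I) * w)) = ∫ w in S, h w := by
  have h1 := (rotation (Circle.exp α)).measurePreserving.setIntegral_preimage_emb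
      (rotation (Circle.exp α)).toHomeomorph.toMeasurableEquiv.measurableEmbedding h S
  rw [hS] at h1
  rw [← h1]
  apply setIntegral_congr_fun hSm
  intro w _
  simp [Circle.coe_exp]

lemma conj_cont : Continuous (fun w : ℂ => (starRingEnd ℂ) w) := continuous_star

/-- The rotation equivariance of the integrand. -/
lemma gRotEq (ζ : ℂ) (α : ℝ) (w : ℂ) :
    (DDGDisk (Complex.exp ((α:ℂ) * Complex.I) * w))^2
        * (((1 - ‖Complex.exp ((α:ℂ) * Complex.I) * w‖ ^ 2) ^ 2 : ℝ) : ℂ)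
        / (1 - ζ * (starRingEnd ℂ) (Complex.exp ((α:ℂ) * Complex.I) * w))^4
    = ((DDGDisk w)^2 * (((1 - ‖w‖ ^ 2) ^ 2 : ℝ) : ℂ))
        * ((Complex.exp (-(α:ℂ) * Complex.I))^4
          / (1 - (ζ * (starRingEnd ℂ) w) * Complex.exp (-(α:ℂ) * Complex.I))^4) := by
  have hc : ‖Complex.exp ((α:ℂ) * Complex.I)‖ = 1 := Complex.norm_exp_ofReal_mul_I α
  have hrot := DDGDisk_rot hc w
  have hinv : (Complex.exp ((α:ℂ) * Complex.I))⁻¹ = Complex.exp (-(α:ℂ) * Complex.I) := by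
    rw [← Complex.exp_neg]; congr 1; ring
  have hconj : (starRingEnd ℂ) (Complex.exp ((α:ℂ) * Complex.I))
      = Complex.exp (-(α:ℂ) * Complex.I) := by
    rw [← Complex.exp_conj]
    congr 1
    rw [map_mul, Complex.conj_ofReal, Complex.conj_I]
    ring
  rw [norm_mul, hc, one_mul, map_mul (starRingEnd ℂ), hconj, hrot, hinv]
  ring

/-- Vanishing of the principal value integral. -/
theorem DDGDisk_sq_integral_vanishes (ζ : ℂ) (hζ : ‖ζ‖ < 1) :
    Tendsto (fun ε : ℝ =>
        ∫ w in Metric.ball (0:ℂ) 1 \ Metric.ball (0:ℂ) ε,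
          (DDGDisk w)^2 * (((1 - ‖w‖ ^ 2) ^ 2 : ℝ) : ℂ)
            / (1 - ζ * (starRingEnd ℂ) w)^4)
      (𝓝[>] (0:ℝ)) (𝓝 0) := by
  set g : ℂ → ℂ := fun w => (DDGDisk w)^2 * (((1 - ‖w‖ ^ 2) ^ 2 : ℝ) : ℂ)
      / (1 - ζ * (starRingEnd ℂ) w)^4 with hgdef
  have main : ∀ ε : ℝ, 0 < ε →
      (∫ w in Metric.ball (0:ℂ) 1 \ Metric.ball (0:ℂ) ε, g w) = 0 := by
    intro ε hε
    set S : Set ℂ := Metric.ball (0:ℂ) 1 \ Metric.ball (0:ℂ) ε with hSdef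
    have hSm : MeasurableSet S := measurableSet_ball.diff measurableSet_ball
    have hmemS : ∀ w : ℂ, w ∈ S ↔ (‖w‖ < 1 ∧ ¬ (‖w‖ < ε)) := by
      intro w
      simp [hSdef, Metric.mem_ball, Complex.dist_eq]
    have hrotS : ∀ a : Circle, (rotation a) ⁻¹' S = S := by
      intro a; ext w
      simp only [Set.mem_preimage, hmemS, rotation_apply, norm_mul, Circle.norm_coe, one_mul]
    by_cases hInt : IntegrableOn g S volume
    swap
    · exact integral_undef hInt
    -- notation
    set μ : Measure ℝ := volume.restrict (Set.Ioc 0 (2*Real.pi)) with hμdef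
    set ν : Measure ℂ := volume.restrict S with hνdef
    -- the slit nonvanishing facts
    have hne1 : ∀ w : ℂ, ‖w‖ < 1 → (1 : ℂ) - ζ * (starRingEnd ℂ) w ≠ 0 := by
      intro w hw h
      have h1 : ζ * (starRingEnd ℂ) w = 1 := (sub_eq_zero.mp h).symm
      have h2 : ‖ζ * (starRingEnd ℂ) w‖ = 1 := by rw [h1]; simp
      have h3 : ‖ζ * (starRingEnd ℂ) w‖ < 1 := by
        rw [norm_mul, Complex.norm_conj]
        calc ‖ζ‖ * ‖w‖ ≤ ‖ζ‖ * 1 :=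
              mul_le_mul_of_nonneg_left hw.le (norm_nonneg _)
          _ < 1 := by rw [mul_one]; exact hζ
      rw [h2] at h3; exact lt_irrefl _ h3
    have haw : ∀ w : ℂ, ‖w‖ < 1 → ‖ζ * (starRingEnd ℂ) w‖ < 1 := by
      intro w hw
      rw [norm_mul, Complex.norm_conj]
      calc ‖ζ‖ * ‖w‖ ≤ ‖ζ‖ * 1 :=
            mul_le_mul_of_nonneg_left hw.le (norm_nonneg _)
        _ < 1 := by rw [mul_one]; exact hζ
    -- rewriting the rotated integrand
    have hgrot : ∀ (α : ℝ) (w : ℂ), g (Complex.exp ((α:ℂ) * Complex.I) * w)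
        = ((DDGDisk w)^2 * (((1 - ‖w‖ ^ 2) ^ 2 : ℝ) : ℂ))
          * ((Complex.exp (-(α:ℂ) * Complex.I))^4
            / (1 - (ζ * (starRingEnd ℂ) w) * Complex.exp (-(α:ℂ) * Complex.I))^4) := by
      intro α w
      rw [hgdef]
      exact gRotEq ζ α w
    -- Step C : the inner angular integral vanishes
    have hC : ∀ w : ℂ, ‖w‖ < 1 →
        (∫ α, g (Complex.exp ((α:ℂ) * Complex.I) * w) ∂μ) = 0 := by
      intro w hw
      rw [hμdef]
      simp only [hgrot]
      rw [integral_const_mul]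
      rw [← intervalIntegral.integral_of_le (by positivity : (0:ℝ) ≤ 2*Real.pi)]
      rw [key_integral (haw w hw), mul_zero]
    -- Step B : rotation invariance of the w-integral
    have hB : ∀ α : ℝ, (∫ w, g (Complex.exp ((α:ℂ) * Complex.I) * w) ∂ν) = ∫ w, g w ∂ν :=
      fun α => rot_setIntegral S hSm hrotS g α
    have hBnorm : ∀ α : ℝ, (∫ w, ‖g (Complex.exp ((α:ℂ) * Complex.I) * w)‖ ∂ν)
        = ∫ w, ‖g w‖ ∂ν :=
      fun α => rot_setIntegral S hSm hrotS (fun w => ‖g w‖) α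
    -- integrability of each rotated slice
    have hIα : ∀ α : ℝ, Integrable (fun w => g (Complex.exp ((α:ℂ) * Complex.I) * w)) ν := by
      intro α
      have h1 := ((rotation (Circle.exp α)).measurePreserving.restrict_preimage
        (s := S) hSm).integrable_comp_emb
        (rotation (Circle.exp α)).toHomeomorph.toMeasurableEquiv.measurableEmbedding
        (g := g)
      rw [hrotS] at h1
      have h2 := h1.mpr hInt
      have h3 : (g ∘ ⇑(rotation (Circle.exp α)))
          = fun w => g (Complex.exp ((α:ℂ) * Complex.I) * w) := by
        funext w; simp [Function.comp, Circle.coe_exp]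
      rwa [h3] at h2
    -- the uncurried function and its measurability
    set F : ℝ → ℂ → ℂ := fun α w => g (Complex.exp ((α:ℂ) * Complex.I) * w) with hFdef
    have hqmp : Measure.QuasiMeasurePreserving (Prod.snd : ℝ × ℂ → ℂ) (μ.prod ν) ν := by
      refine ⟨measurable_snd, ?_⟩
      rw [Measure.map_snd_prod]
      exact Measure.smul_absolutelyContinuous
    have hgm : AEStronglyMeasurable g ν := hInt.aestronglyMeasurable
    have hφmeas : Measurable (fun p : ℝ × ℂ => (Complex.exp (-(p.1:ℂ) * Complex.I))^4
        * (1 - ζ * (starRingEnd ℂ) p.2)^4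
        / (1 - (ζ * (starRingEnd ℂ) p.2) * Complex.exp (-(p.1:ℂ) * Complex.I))^4) := by
      have hc : Continuous (fun p : ℝ × ℂ => (starRingEnd ℂ) p.2) := conj_cont.comp continuous_snd
      have h1 : Continuous (fun p : ℝ × ℂ => (Complex.exp (-(p.1:ℂ) * Complex.I))^4
          * (1 - ζ * (starRingEnd ℂ) p.2)^4) := by fun_prop
      have h2 : Continuous (fun p : ℝ × ℂ =>
          (1 - (ζ * (starRingEnd ℂ) p.2) * Complex.exp (-(p.1:ℂ) * Complex.I))^4) := by fun_prop
      exact h1.measurable.div h2.measurable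
    set φ : ℝ × ℂ → ℂ := fun p => (Complex.exp (-(p.1:ℂ) * Complex.I))^4
        * (1 - ζ * (starRingEnd ℂ) p.2)^4
        / (1 - (ζ * (starRingEnd ℂ) p.2) * Complex.exp (-(p.1:ℂ) * Complex.I))^4 with hφdef
    have hφm : AEStronglyMeasurable φ (μ.prod ν) := hφmeas.aestronglyMeasurable
    have hS2 : ∀ᵐ p : ℝ × ℂ ∂(μ.prod ν), p.2 ∈ S := by
      rw [ae_iff]
      have he : {p : ℝ × ℂ | ¬ p.2 ∈ S} = Set.univ ×ˢ Sᶜ := by ext p; simp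
      rw [he, Measure.prod_prod, hνdef, Measure.restrict_apply hSm.compl]
      simp
    have haeEq : (fun p : ℝ × ℂ => φ p * g p.2) =ᵐ[μ.prod ν] Function.uncurry F := by
      filter_upwards [hS2] with p hp
      have hw : ‖p.2‖ < 1 := ((hmemS p.2).mp hp).1
      have h1 := hne1 p.2 hw
      have h2 : (1:ℂ) - (ζ * (starRingEnd ℂ) p.2) * Complex.exp (-(p.1:ℂ) * Complex.I) ≠ 0 :=
        vne (haw p.2 hw) p.1
      show φ p * g p.2 = F p.1 p.2
      have e1 : F p.1 p.2 = g (Complex.exp ((p.1:ℂ) * Complex.I) * p.2) := rfl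
      have e2 : φ p = (Complex.exp (-(p.1:ℂ) * Complex.I))^4
          * (1 - ζ * (starRingEnd ℂ) p.2)^4
          / (1 - (ζ * (starRingEnd ℂ) p.2) * Complex.exp (-(p.1:ℂ) * Complex.I))^4 := rfl
      have e3 : g p.2 = (DDGDisk p.2)^2 * (((1 - ‖p.2‖ ^ 2) ^ 2 : ℝ) : ℂ)
          / (1 - ζ * (starRingEnd ℂ) p.2)^4 := rfl
      rw [e1, hgrot p.1 p.2, e2, e3]
      set A : ℂ := 1 - ζ * (starRingEnd ℂ) p.2 with hA
      set B : ℂ := 1 - ζ * (starRingEnd ℂ) p.2 * Complex.exp (-(p.1:ℂ) * Complex.I) with hB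
      set C : ℂ := DDGDisk p.2 ^ 2 * (((1 - ‖p.2‖ ^ 2) ^ 2 : ℝ) : ℂ) with hC
      clear_value A B C
      field_simp
    have hAESM : AEStronglyMeasurable (Function.uncurry F) (μ.prod ν) :=
      ((hφm.mul (hgm.comp_quasiMeasurePreserving hqmp)).congr haeEq)
    have hIntF : Integrable (Function.uncurry F) (μ.prod ν) := by
      rw [integrable_prod_iff hAESM]
      constructor
      · exact Filter.Eventually.of_forall fun α => hIα α
      · have hcongr : (fun α : ℝ => ∫ w, ‖Function.uncurry F (α, w)‖ ∂ν)
            = fun _ : ℝ => ∫ w, ‖g w‖ ∂ν := by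
          funext α
          exact hBnorm α
        rw [hcongr]
        rw [integrable_const_iff]
        right
        rw [hμdef]
        exact isFiniteMeasure_restrict.mpr (by simp [Real.volume_Ioc, ENNReal.mul_eq_top])
    -- Fubini
    have hswap := integral_integral_swap (f := F) hIntF
    have hLHS : (∫ α, ∫ w, F α w ∂ν ∂μ) = (μ Set.univ).toReal • (∫ w, g w ∂ν) := by
      have : (fun α : ℝ => ∫ w, F α w ∂ν) = fun _ : ℝ => ∫ w, g w ∂ν := funext fun α => hB α
      rw [this, integral_const]
      rfl
    have hRHS : (∫ w, ∫ α, F α w ∂μ ∂ν) = 0 := by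
      have hae0 : (fun w : ℂ => ∫ α, F α w ∂μ) =ᵐ[ν] fun _ => (0:ℂ) := by
        rw [hνdef]
        filter_upwards [ae_restrict_mem hSm] with w hw
        exact hC w (((hmemS w).mp hw).1)
      rw [integral_congr_ae hae0, integral_zero]
    rw [hLHS, hRHS] at hswap
    have hμt : (μ Set.univ).toReal = 2 * Real.pi := by
      rw [hμdef, Measure.restrict_apply_univ, Real.volume_Ioc, sub_zero,
        ENNReal.toReal_ofReal (by positivity)]
    rw [hμt] at hswap
    have h2π : (2 * Real.pi : ℝ) ≠ 0 := by positivity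
    rcases smul_eq_zero.mp hswap with h | h
    · exact absurd h h2π
    · exact h
  have heq : (fun ε : ℝ =>
        ∫ w in Metric.ball (0:ℂ) 1 \ Metric.ball (0:ℂ) ε, g w)
      =ᶠ[𝓝[>] (0:ℝ)] (fun _ => (0:ℂ)) := by
    filter_upwards [self_mem_nhdsWithin] with ε hε
    exact main ε hε
  rw [tendsto_congr' heq]
  exact tendsto_const_nhds
end
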